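/- arXiv:1505.02038 — 2 statements merged into one kernel-verified Lean document; each statement's English description precedes it below -/
import Mathlib

section
/- Let R(u) = ρ u (u−u₂)(u−u₃) with ρ > 0 and 0 ≤ u₂ ≤ u₃, let κ ∈ ℝ and β > 0. Then there exists λ₀ > 0 such that for every λ ≥ λ₀, every g ∈ L^∞(0,T) with ‖g‖_{L^∞(0,T)} ≤ β, and every v ∈ L^∞(Q), one has ∫∫_Q [ e^{−λt} R(e^{λt} v(x,t)) + (λ + κ) v(x,t) − κ (K_λ(g)v)(x,t) ] · v(x,t) dx dt ≥ (λ/2) ‖v‖²_{L²(Q)}. -/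
/-!
For `v` in `L^∞(Q)` the reaction part of the integrand is
`e^{-λt} R(e^{λt} v) v = ρ v² (e^{λt}v - u₂)(e^{λt}v - u₃) ≥ -ρ(u₃ - u₂)²/4 · v²`.
The memory part is a bilinear form in `v(x, ·)` with kernel `e^{-λ(t-s)} g(t-s) 1_{s<t}`, whose
row and column integrals are at most `β/λ`; by the Schur test (AM-GM plus Fubini),
`|∫∫_Q (K_λ(g)v) v| ≤ (β/λ) ‖v‖²`. So the form is at least
`(λ + κ - ρ(u₃ - u₂)²/4 - |κ|β/λ) ‖v‖²`, and the coefficient exceeds `λ/2` for large `λ`.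
Bounded measurable representatives of `v` and `g` change the memory term only on a null set of `Q`.
-/

open MeasureTheory Set Real Function

def schloglReaction (ρ u₂ u₃ u : ℝ) : ℝ := ρ * u * (u - u₂) * (u - u₃)

/-- `(K_λ(g) u)(t)`. -/
noncomputable def memoryIntegral (lam : ℝ) (g u : ℝ → ℝ) (t : ℝ) : ℝ :=
  ∫ s in Ioo 0 t, exp (-(lam * (t - s))) * g (t - s) * u s

noncomputable def energyDensity {X : Type*} (ρ u₂ u₃ κ lam : ℝ) (g : ℝ → ℝ) (v : X × ℝ → ℝ)
    (q : X × ℝ) : ℝ :=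
  (exp (-(lam * q.2)) * schloglReaction ρ u₂ u₃ (exp (lam * q.2) * v q) + (lam + κ) * v q -
    κ * memoryIntegral lam g (fun s => v (q.1, s)) q.2) * v q

theorem le_exp_neg_mul_schloglReaction_mul {ρ : ℝ} (hρ : 0 ≤ ρ) (u₂ u₃ x w : ℝ) :
    -(ρ * (u₃ - u₂) ^ 2 / 4) * w ^ 2 ≤
      exp (-x) * schloglReaction ρ u₂ u₃ (exp x * w) * w := by
  have hexp : exp (-x) * exp x = 1 := by rw [← exp_add, neg_add_cancel, exp_zero]
  have key : exp (-x) * schloglReaction ρ u₂ u₃ (exp x * w) * w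
      = ρ * w ^ 2 * ((exp x * w - u₂) * (exp x * w - u₃)) := by
    unfold schloglReaction
    linear_combination (ρ * w ^ 2 * (exp x * w - u₂) * (exp x * w - u₃)) * hexp
  rw [key]
  nlinarith [mul_nonneg (mul_nonneg hρ (sq_nonneg w)) (sq_nonneg (2 * (exp x * w) - u₂ - u₃))]

theorem integrableOn_exp_neg_mul_sub_Iic {lam : ℝ} (hlam : 0 < lam) (t : ℝ) :
    IntegrableOn (fun s => exp (-(lam * (t - s)))) (Iic t) := by
  have h : (fun s => exp (-(lam * (t - s)))) = fun s => exp (-(lam * t)) * exp (lam * s) := by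
    ext s; rw [← exp_add]; ring_nf
  rw [h]
  exact (integrableOn_exp_mul_Iic hlam t).const_mul _

theorem integral_exp_neg_mul_sub_Iic {lam : ℝ} (hlam : 0 < lam) (t : ℝ) :
    ∫ s in Iic t, exp (-(lam * (t - s))) = 1 / lam := by
  have h : (fun s => exp (-(lam * (t - s)))) = fun s => exp (-(lam * t)) * exp (lam * s) := by
    ext s; rw [← exp_add]; ring_nf
  rw [h, integral_const_mul, integral_exp_mul_Iic hlam, mul_div_assoc', ← exp_add]
  simp

theorem integrableOn_exp_neg_mul_sub_Ici {lam : ℝ} (hlam : 0 < lam) (s : ℝ) :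
    IntegrableOn (fun t => exp (-(lam * (t - s)))) (Ici s) := by
  have h : (fun t => exp (-(lam * (t - s)))) = fun t => exp (lam * s) * exp (-lam * t) := by
    ext t; rw [← exp_add]; ring_nf
  rw [h, integrableOn_Ici_iff_integrableOn_Ioi]
  exact (integrableOn_exp_mul_Ioi (neg_neg_iff_pos.mpr hlam) s).const_mul _

theorem integral_exp_neg_mul_sub_Ici {lam : ℝ} (hlam : 0 < lam) (s : ℝ) :
    ∫ t in Ici s, exp (-(lam * (t - s))) = 1 / lam := by
  have h : (fun t => exp (-(lam * (t - s)))) = fun t => exp (lam * s) * exp (-lam * t) := by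
    ext t; rw [← exp_add]; ring_nf
  rw [h, integral_Ici_eq_integral_Ioi, integral_const_mul,
    integral_exp_mul_Ioi (neg_neg_iff_pos.mpr hlam), mul_div_assoc', mul_neg, ← exp_add]
  field_simp
  simp

theorem setIntegral_exp_neg_mul_sub_le_of_subset_Iic {lam t : ℝ} (hlam : 0 < lam) {S : Set ℝ}
    (hS : S ⊆ Iic t) : ∫ s in S, exp (-(lam * (t - s))) ≤ 1 / lam := by
  rw [← integral_exp_neg_mul_sub_Iic hlam t]
  exact setIntegral_mono_set (integrableOn_exp_neg_mul_sub_Iic hlam t)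
    (ae_of_all _ fun _ => (exp_pos _).le) (ae_of_all _ hS)

theorem setIntegral_exp_neg_mul_sub_le_of_subset_Ici {lam s : ℝ} (hlam : 0 < lam) {S : Set ℝ}
    (hS : S ⊆ Ici s) : ∫ t in S, exp (-(lam * (t - s))) ≤ 1 / lam := by
  rw [← integral_exp_neg_mul_sub_Ici hlam s]
  exact setIntegral_mono_set (integrableOn_exp_neg_mul_sub_Ici hlam s)
    (ae_of_all _ fun _ => (exp_pos _).le) (ae_of_all _ hS)

theorem exists_measurable_abs_le_ae_eq {α : Type*} [MeasurableSpace α] {μ : Measure α}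
    {f : α → ℝ} (hf : AEStronglyMeasurable f μ) {C : ℝ} (hC : 0 ≤ C)
    (hfC : eLpNorm f ⊤ μ ≤ ENNReal.ofReal C) :
    ∃ F : α → ℝ, Measurable F ∧ (∀ x, |F x| ≤ C) ∧ f =ᵐ[μ] F := by
  refine ⟨fun x => max (-C) (min C (hf.mk f x)), ?_, fun x => ?_, ?_⟩
  · exact measurable_const.max (measurable_const.min hf.stronglyMeasurable_mk.measurable)
  · exact abs_le.mpr ⟨le_max_left _ _, max_le (by linarith) (min_le_left _ _)⟩
  · have hbound : ∀ᵐ x ∂μ, |f x| ≤ C := by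
      filter_upwards [enorm_ae_le_eLpNormEssSup f μ] with x hx
      rw [← eLpNorm_exponent_top] at hx
      have := hx.trans hfC
      rwa [← ofReal_norm, ENNReal.ofReal_le_ofReal_iff hC, Real.norm_eq_abs] at this
    filter_upwards [hf.ae_eq_mk, hbound] with x hx hxC
    rw [← hx, min_eq_right (abs_le.mp hxC).2, max_eq_right (abs_le.mp hxC).1]

theorem ae_eq_restrict_Ioo_comp_sub_left {g G : ℝ → ℝ} {T t : ℝ}
    (hgG : g =ᵐ[volume.restrict (Ioo 0 T)] G) (htT : t ≤ T) :
    (fun s => g (t - s)) =ᵐ[volume.restrict (Ioo 0 t)] fun s => G (t - s) := by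
  rw [Filter.EventuallyEq, ae_restrict_iff' measurableSet_Ioo] at hgG
  rw [Filter.EventuallyEq, ae_restrict_iff' measurableSet_Ioo]
  filter_upwards [(Measure.measurePreserving_sub_left volume t).quasiMeasurePreserving.ae hgG]
    with s hs hst
  exact hs ⟨by linarith [hst.2], by linarith [hst.1]⟩

section Schur

variable {α : Type*} [MeasurableSpace α] {μ : Measure α}

theorem abs_integral_mul_mul_abs_le {k u : α → ℝ} (hk : Integrable k μ)
    (hku : Integrable (fun s => |k s| * u s ^ 2) μ) (c : ℝ) :
    |∫ s, k s * u s ∂μ| * |c| ≤ ((∫ s, |k s| * u s ^ 2 ∂μ) + ∫ s, |k s| * c ^ 2 ∂μ) / 2 := by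
  have hkc : Integrable (fun s => |k s| * c ^ 2) μ := hk.abs.mul_const _
  calc |∫ s, k s * u s ∂μ| * |c| ≤ (∫ s, |k s| * |u s| ∂μ) * |c| := by
        gcongr
        exact abs_integral_le_integral_abs.trans_eq (by simp only [abs_mul])
    _ = ∫ s, |k s| * (|u s| * |c|) ∂μ := by
        rw [← integral_mul_const]; simp only [mul_assoc]
    _ ≤ ∫ s, (|k s| * u s ^ 2 + |k s| * c ^ 2) / 2 ∂μ := by
        refine integral_mono_of_nonneg (ae_of_all _ fun s => by positivity)
          ((hku.add hkc).div_const 2) (ae_of_all _ fun s => ?_)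
        have := two_mul_le_add_sq |u s| |c|
        simp only [sq_abs] at this
        nlinarith [abs_nonneg (k s)]
    _ = _ := by rw [integral_div, integral_add hku hkc]

variable [IsFiniteMeasure μ]

theorem integrable_sq_of_abs_le {u : α → ℝ} (hu : Measurable u) {M : ℝ} (hM : ∀ x, |u x| ≤ M) :
    Integrable (fun x => u x ^ 2) μ :=
  .of_bound (by fun_prop) (M ^ 2) (ae_of_all _ fun x => by
    simpa [sq_abs] using sq_le_sq' (abs_le.mp (hM x)).1 (abs_le.mp (hM x)).2)

-- the Schur test
theorem integral_abs_integral_mul_mul_abs_le {h : α → α → ℝ} (hh : Measurable (uncurry h))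
    {K : ℝ} (hK : ∀ t s, |h t s| ≤ K) {A B : ℝ} (hrow : ∀ t, ∫ s, |h t s| ∂μ ≤ A)
    (hcol : ∀ s, ∫ t, |h t s| ∂μ ≤ B) {u : α → ℝ} (hu : Measurable u) {M : ℝ}
    (hM : ∀ x, |u x| ≤ M) :
    ∫ t, |∫ s, h t s * u s ∂μ| * |u t| ∂μ ≤ (A + B) / 2 * ∫ t, u t ^ 2 ∂μ := by
  have hbound : ∀ t s x, |(|h t s| * u x ^ 2)| ≤ K * M ^ 2 := fun t s x => by
    rw [abs_of_nonneg (by positivity)]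
    exact mul_le_mul (hK t s) (sq_le_sq' (abs_le.mp (hM x)).1 (abs_le.mp (hM x)).2)
      (sq_nonneg _) ((abs_nonneg _).trans (hK t s))
  have hP : Integrable (uncurry fun t s => |h t s| * u s ^ 2) (μ.prod μ) :=
    .of_bound (by fun_prop) (K * M ^ 2) (ae_of_all _ fun p => hbound p.1 p.2 p.2)
  have hR : Integrable (uncurry fun t s => |h t s| * u t ^ 2) (μ.prod μ) :=
    .of_bound (by fun_prop) (K * M ^ 2) (ae_of_all _ fun p => hbound p.1 p.2 p.1)
  have hP₁ : Integrable (fun t => ∫ s, |h t s| * u s ^ 2 ∂μ) μ := hP.integral_prod_left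
  have hR₁ : Integrable (fun t => ∫ s, |h t s| * u t ^ 2 ∂μ) μ := hR.integral_prod_left
  have hrowA : ∫ t, ∫ s, |h t s| * u t ^ 2 ∂μ ∂μ ≤ A * ∫ t, u t ^ 2 ∂μ := by
    rw [← integral_const_mul]
    refine integral_mono hR₁ ((integrable_sq_of_abs_le hu hM).const_mul A) fun t => ?_
    simp only [integral_mul_const]
    exact mul_le_mul_of_nonneg_right (hrow t) (sq_nonneg _)
  have hcolB : ∫ t, ∫ s, |h t s| * u s ^ 2 ∂μ ∂μ ≤ B * ∫ t, u t ^ 2 ∂μ := by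
    rw [integral_integral_swap hP, ← integral_const_mul]
    refine integral_mono hP.integral_prod_right
      ((integrable_sq_of_abs_le hu hM).const_mul B) fun s => ?_
    simp only [integral_mul_const]
    exact mul_le_mul_of_nonneg_right (hcol s) (sq_nonneg _)
  calc ∫ t, |∫ s, h t s * u s ∂μ| * |u t| ∂μ
      ≤ ∫ t, ((∫ s, |h t s| * u s ^ 2 ∂μ) + ∫ s, |h t s| * u t ^ 2 ∂μ) / 2 ∂μ := by
        refine integral_mono_of_nonneg (ae_of_all _ fun t => by positivity)
          ((hP₁.add hR₁).div_const 2) (ae_of_all _ fun t => abs_integral_mul_mul_abs_le (k := h t)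
            (.of_bound (by fun_prop) K (ae_of_all _ fun s => hK t s))
            (.of_bound (by fun_prop) (K * M ^ 2) (ae_of_all _ fun s => hbound t s s)) (u t))
    _ = ((∫ t, ∫ s, |h t s| * u s ^ 2 ∂μ ∂μ) + ∫ t, ∫ s, |h t s| * u t ^ 2 ∂μ ∂μ) / 2 := by
        rw [integral_div, integral_add hP₁ hR₁]
    _ ≤ (A + B) / 2 * ∫ t, u t ^ 2 ∂μ := by linarith

end Schur

noncomputable def memoryKernel (lam : ℝ) (g : ℝ → ℝ) (t s : ℝ) : ℝ :=
  if s < t then exp (-(lam * (t - s))) * g (t - s) else 0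

section MemoryKernel

variable {lam β : ℝ} {G : ℝ → ℝ}

theorem measurable_memoryKernel (hG : Measurable G) : Measurable (uncurry (memoryKernel lam G)) :=
  Measurable.ite (measurableSet_lt measurable_snd measurable_fst) (by fun_prop) measurable_const

theorem abs_memoryKernel_le (hGβ : ∀ t, |G t| ≤ β) (t s : ℝ) :
    |memoryKernel lam G t s| ≤ β * if s < t then exp (-(lam * (t - s))) else 0 := by
  unfold memoryKernel
  split_ifs
  · rw [abs_mul, abs_of_pos (exp_pos _), mul_comm]
    exact mul_le_mul_of_nonneg_right (hGβ _) (exp_pos _).le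
  · simp

theorem abs_memoryKernel_le_const (hlam : 0 ≤ lam) (hGβ : ∀ t, |G t| ≤ β) (t s : ℝ) :
    |memoryKernel lam G t s| ≤ β := by
  refine (abs_memoryKernel_le hGβ t s).trans ?_
  have hβ : 0 ≤ β := (abs_nonneg _).trans (hGβ 0)
  split_ifs with hst
  · exact mul_le_of_le_one_right hβ (exp_le_one_iff.mpr (by nlinarith))
  · simpa using hβ

theorem integral_abs_memoryKernel_row_le (hlam : 0 < lam) (hGβ : ∀ t, |G t| ≤ β) (T t : ℝ) :
    ∫ s in Ioo 0 T, |memoryKernel lam G t s| ≤ β / lam := by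
  have hβ : 0 ≤ β := (abs_nonneg _).trans (hGβ 0)
  calc ∫ s in Ioo 0 T, |memoryKernel lam G t s|
      ≤ ∫ s in Ioo 0 T, β * (Iio t).indicator (fun s => exp (-(lam * (t - s)))) s :=
        integral_mono_of_nonneg (ae_of_all _ fun _ => abs_nonneg _)
          ((((integrableOn_exp_neg_mul_sub_Iic hlam t).mono_set Iio_subset_Iic_self)
            |>.integrable_indicator measurableSet_Iio).integrableOn.const_mul β)
          (ae_of_all _ fun s => abs_memoryKernel_le hGβ t s)
    _ ≤ β / lam := by
        rw [integral_const_mul, setIntegral_indicator measurableSet_Iio, div_eq_mul_one_div]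
        exact mul_le_mul_of_nonneg_left (setIntegral_exp_neg_mul_sub_le_of_subset_Iic hlam
          (inter_subset_right.trans Iio_subset_Iic_self)) hβ

theorem integral_abs_memoryKernel_col_le (hlam : 0 < lam) (hGβ : ∀ t, |G t| ≤ β) (T s : ℝ) :
    ∫ t in Ioo 0 T, |memoryKernel lam G t s| ≤ β / lam := by
  have hβ : 0 ≤ β := (abs_nonneg _).trans (hGβ 0)
  calc ∫ t in Ioo 0 T, |memoryKernel lam G t s|
      ≤ ∫ t in Ioo 0 T, β * (Ioi s).indicator (fun t => exp (-(lam * (t - s)))) t :=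
        integral_mono_of_nonneg (ae_of_all _ fun _ => abs_nonneg _)
          ((((integrableOn_exp_neg_mul_sub_Ici hlam s).mono_set Ioi_subset_Ici_self)
            |>.integrable_indicator measurableSet_Ioi).integrableOn.const_mul β)
          (ae_of_all _ fun t => abs_memoryKernel_le hGβ t s)
    _ ≤ β / lam := by
        rw [integral_const_mul, setIntegral_indicator measurableSet_Ioi, div_eq_mul_one_div]
        exact mul_le_mul_of_nonneg_left (setIntegral_exp_neg_mul_sub_le_of_subset_Ici hlam
          (inter_subset_right.trans Ioi_subset_Ici_self)) hβ

theorem memoryIntegral_eq_integral_memoryKernel_mul {T t : ℝ} (htT : t ≤ T) (u : ℝ → ℝ) :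
    memoryIntegral lam G u t = ∫ s in Ioo 0 T, memoryKernel lam G t s * u s := by
  have hIoo : Ioo 0 T ∩ Iio t = Ioo 0 t := by rw [Ioo_inter_Iio, min_eq_right htT]
  simp_rw [memoryKernel, ite_mul, zero_mul]
  rw [memoryIntegral, ← hIoo, ← setIntegral_indicator measurableSet_Iio]
  rfl

theorem integral_abs_memoryIntegral_mul_abs_le (hlam : 0 < lam) (hG : Measurable G)
    (hGβ : ∀ t, |G t| ≤ β) {T M : ℝ} {u : ℝ → ℝ} (hu : Measurable u) (huM : ∀ t, |u t| ≤ M) :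
    ∫ t in Ioo 0 T, |memoryIntegral lam G u t| * |u t| ≤ β / lam * ∫ t in Ioo 0 T, u t ^ 2 := by
  calc ∫ t in Ioo 0 T, |memoryIntegral lam G u t| * |u t|
      = ∫ t in Ioo 0 T, |∫ s in Ioo 0 T, memoryKernel lam G t s * u s| * |u t| :=
        setIntegral_congr_fun measurableSet_Ioo fun t ht => by
          rw [memoryIntegral_eq_integral_memoryKernel_mul ht.2.le]
    _ ≤ (β / lam + β / lam) / 2 * ∫ t in Ioo 0 T, u t ^ 2 :=
        integral_abs_integral_mul_mul_abs_le (measurable_memoryKernel hG)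
          (abs_memoryKernel_le_const hlam.le hGβ) (integral_abs_memoryKernel_row_le hlam hGβ T)
          (integral_abs_memoryKernel_col_le hlam hGβ T) hu huM
    _ = β / lam * ∫ t in Ioo 0 T, u t ^ 2 := by ring

theorem abs_memoryIntegral_le (hlam : 0 ≤ lam) (hGβ : ∀ t, |G t| ≤ β) {M t : ℝ} {u : ℝ → ℝ}
    (huM : ∀ t, |u t| ≤ M) (ht : 0 ≤ t) : |memoryIntegral lam G u t| ≤ β * M * t := by
  have h := norm_setIntegral_le_of_norm_le_const (μ := volume) (s := Ioo 0 t) (C := β * M)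
    (f := fun s => exp (-(lam * (t - s))) * G (t - s) * u s) measure_Ioo_lt_top fun s hs => by
      have hexp : exp (-(lam * (t - s))) ≤ 1 := exp_le_one_iff.mpr (by nlinarith [hs.2])
      rw [norm_mul, norm_mul, Real.norm_of_nonneg (exp_pos _).le, Real.norm_eq_abs,
        Real.norm_eq_abs]
      exact mul_le_mul (mul_le_of_le_one_left (abs_nonneg _) hexp |>.trans (hGβ _)) (huM s)
        (abs_nonneg _) ((abs_nonneg _).trans (hGβ 0))
  rwa [Real.volume_real_Ioo_of_le ht, sub_zero] at h

end MemoryKernel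

section Cylinder

variable {X : Type*} [MeasurableSpace X] {μ : Measure X} {T lam β M : ℝ} {G : ℝ → ℝ}
  {w : X × ℝ → ℝ}

theorem measurable_memoryIntegral (hG : Measurable G) (hw : Measurable w) :
    Measurable fun q : X × ℝ => memoryIntegral lam G (fun s => w (q.1, s)) q.2 := by
  have hS : MeasurableSet {p : (X × ℝ) × ℝ | p.2 ∈ Ioo 0 p.1.2} :=
    (measurableSet_lt measurable_const measurable_snd).inter
      (measurableSet_lt measurable_snd (measurable_snd.comp measurable_fst))
  have h : (fun q : X × ℝ => memoryIntegral lam G (fun s => w (q.1, s)) q.2) = fun q =>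
      ∫ s, {p : (X × ℝ) × ℝ | p.2 ∈ Ioo 0 p.1.2}.indicator
        (fun p => exp (-(lam * (p.1.2 - p.2))) * G (p.1.2 - p.2) * w (p.1.1, p.2)) (q, s) := by
    funext q
    rw [memoryIntegral, ← integral_indicator measurableSet_Ioo]
    rfl
  rw [h]
  exact (Measurable.indicator (by fun_prop) hS).stronglyMeasurable.integral_prod_right'.measurable

theorem ae_mem_Ioo_snd : ∀ᵐ q ∂μ.prod (volume.restrict (Ioo 0 T)), q.2 ∈ Ioo 0 T :=
  Measure.quasiMeasurePreserving_snd.ae (ae_restrict_mem measurableSet_Ioo)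

theorem ae_abs_memoryIntegral_le (hlam : 0 ≤ lam) (hGβ : ∀ t, |G t| ≤ β)
    (hwM : ∀ q, |w q| ≤ M) :
    ∀ᵐ q ∂μ.prod (volume.restrict (Ioo 0 T)),
      |memoryIntegral lam G (fun s => w (q.1, s)) q.2| ≤ β * M * T := by
  filter_upwards [ae_mem_Ioo_snd] with q hq
  have hβ : 0 ≤ β := (abs_nonneg _).trans (hGβ 0)
  have hM : 0 ≤ M := (abs_nonneg _).trans (hwM q)
  exact (abs_memoryIntegral_le hlam hGβ (fun s => hwM (q.1, s)) hq.1.le).trans (by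
    gcongr; exact hq.2.le)

variable [IsFiniteMeasure μ]

theorem integrable_abs_memoryIntegral_mul_abs (hlam : 0 ≤ lam) (hG : Measurable G)
    (hGβ : ∀ t, |G t| ≤ β) (hw : Measurable w) (hwM : ∀ q, |w q| ≤ M) :
    Integrable (fun q => |memoryIntegral lam G (fun s => w (q.1, s)) q.2| * |w q|)
      (μ.prod (volume.restrict (Ioo 0 T))) := by
  refine .of_bound ((measurable_memoryIntegral hG hw).abs.mul hw.abs).aestronglyMeasurable
    (β * M * T * M) ?_
  filter_upwards [ae_abs_memoryIntegral_le hlam hGβ hwM] with q hq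
  rw [norm_mul, norm_abs_eq_norm, norm_abs_eq_norm, Real.norm_eq_abs, Real.norm_eq_abs]
  exact mul_le_mul hq (hwM q) (abs_nonneg _) ((abs_nonneg _).trans hq)

theorem integral_abs_memoryIntegral_mul_abs_le_prod (hlam : 0 < lam) (hG : Measurable G)
    (hGβ : ∀ t, |G t| ≤ β) (hw : Measurable w) (hwM : ∀ q, |w q| ≤ M) :
    ∫ q, |memoryIntegral lam G (fun s => w (q.1, s)) q.2| * |w q|
        ∂μ.prod (volume.restrict (Ioo 0 T)) ≤
      β / lam * ∫ q, w q ^ 2 ∂μ.prod (volume.restrict (Ioo 0 T)) := by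
  have hsq := integrable_sq_of_abs_le (μ := μ.prod (volume.restrict (Ioo 0 T))) hw hwM
  have hK := integrable_abs_memoryIntegral_mul_abs (μ := μ) (T := T) hlam.le hG hGβ hw hwM
  rw [integral_prod _ hK, integral_prod _ hsq, ← integral_const_mul]
  exact integral_mono hK.integral_prod_left (hsq.integral_prod_left.const_mul _) fun x =>
    integral_abs_memoryIntegral_mul_abs_le hlam hG hGβ (hw.comp measurable_prodMk_left)
      fun s => hwM _

theorem integrable_energyDensity {ρ u₂ u₃ κ : ℝ} (hlam : 0 ≤ lam) (hG : Measurable G)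
    (hGβ : ∀ t, |G t| ≤ β) (hw : Measurable w) (hwM : ∀ q, |w q| ≤ M) :
    Integrable (energyDensity ρ u₂ u₃ κ lam G w) (μ.prod (volume.restrict (Ioo 0 T))) := by
  -- `energyDensity` is a continuous function of `(t, w, K_λ(G) w)`, which ranges in a box
  set Φ : ℝ × ℝ × ℝ → ℝ := fun p =>
    (exp (-(lam * p.1)) * schloglReaction ρ u₂ u₃ (exp (lam * p.1) * p.2.1) +
      (lam + κ) * p.2.1 - κ * p.2.2) * p.2.1
  have hΦ : Continuous Φ := by simp only [Φ, schloglReaction]; fun_prop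
  obtain ⟨C, hC⟩ := (isCompact_Icc (a := ((0 : ℝ), -M, -(β * M * T)))
    (b := (T, M, β * M * T))).exists_bound_of_continuousOn hΦ.continuousOn
  have hK := measurable_memoryIntegral (lam := lam) hG hw
  refine .of_bound (by unfold energyDensity schloglReaction; fun_prop) C ?_
  filter_upwards [ae_mem_Ioo_snd, ae_abs_memoryIntegral_le hlam hGβ hwM] with q hq hKq
  exact hC (q.2, w q, _) ⟨⟨hq.1.le, (abs_le.mp (hwM q)).1, (abs_le.mp hKq).1⟩,
    ⟨hq.2.le, (abs_le.mp (hwM q)).2, (abs_le.mp hKq).2⟩⟩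

theorem mul_integral_sq_le_integral_energyDensity {ρ u₂ u₃ κ : ℝ} (hρ : 0 ≤ ρ) (hlam : 0 < lam)
    (hG : Measurable G) (hGβ : ∀ t, |G t| ≤ β) (hw : Measurable w) (hwM : ∀ q, |w q| ≤ M) :
    (lam + κ - ρ * (u₃ - u₂) ^ 2 / 4 - |κ| * (β / lam)) *
        ∫ q, w q ^ 2 ∂μ.prod (volume.restrict (Ioo 0 T)) ≤
      ∫ q, energyDensity ρ u₂ u₃ κ lam G w q ∂μ.prod (volume.restrict (Ioo 0 T)) := by
  set ν := μ.prod (volume.restrict (Ioo 0 T))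
  set K := fun q : X × ℝ => memoryIntegral lam G (fun s => w (q.1, s)) q.2
  have hsq := integrable_sq_of_abs_le (μ := ν) hw hwM
  have hKw := integrable_abs_memoryIntegral_mul_abs (μ := μ) (T := T) hlam.le hG hGβ hw hwM
  have hpt : ∀ q, (lam + κ - ρ * (u₃ - u₂) ^ 2 / 4) * w q ^ 2 - |κ| * (|K q| * |w q|) ≤
      energyDensity ρ u₂ u₃ κ lam G w q := by
    intro q
    have hR := le_exp_neg_mul_schloglReaction_mul hρ u₂ u₃ (lam * q.2) (w q)
    have hκ : -(|κ| * (|K q| * |w q|)) ≤ -(κ * K q * w q) := by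
      rw [neg_le_neg_iff, ← abs_mul, ← abs_mul, ← mul_assoc]; exact le_abs_self _
    simp only [energyDensity, K] at hκ ⊢
    nlinarith
  calc (lam + κ - ρ * (u₃ - u₂) ^ 2 / 4 - |κ| * (β / lam)) * ∫ q, w q ^ 2 ∂ν
      ≤ (lam + κ - ρ * (u₃ - u₂) ^ 2 / 4) * ∫ q, w q ^ 2 ∂ν - |κ| * ∫ q, |K q| * |w q| ∂ν := by
        have := integral_abs_memoryIntegral_mul_abs_le_prod (μ := μ) (T := T) hlam hG hGβ hw hwM
        nlinarith [abs_nonneg κ]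
    _ = ∫ q, ((lam + κ - ρ * (u₃ - u₂) ^ 2 / 4) * w q ^ 2 - |κ| * (|K q| * |w q|)) ∂ν := by
        rw [integral_sub (hsq.const_mul _) (hKw.const_mul _), integral_const_mul,
          integral_const_mul]
    _ ≤ ∫ q, energyDensity ρ u₂ u₃ κ lam G w q ∂ν :=
        integral_mono ((hsq.const_mul _).sub (hKw.const_mul _))
          (integrable_energyDensity hlam.le hG hGβ hw hwM) hpt

end Cylinder

section Congr

variable {X : Type*} [MeasurableSpace X] {μ : Measure X} {T lam : ℝ}
  {g G : ℝ → ℝ} {v w : X × ℝ → ℝ}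

theorem memoryIntegral_ae_congr (hvw : v =ᵐ[μ.prod (volume.restrict (Ioo 0 T))] w)
    (hgG : g =ᵐ[volume.restrict (Ioo 0 T)] G) :
    ∀ᵐ q ∂μ.prod (volume.restrict (Ioo 0 T)),
      memoryIntegral lam g (fun s => v (q.1, s)) q.2 =
        memoryIntegral lam G (fun s => w (q.1, s)) q.2 := by
  have hslices : ∀ᵐ q ∂μ.prod (volume.restrict (Ioo 0 T)),
      ∀ᵐ s ∂volume.restrict (Ioo 0 T), v (q.1, s) = w (q.1, s) :=
    Measure.quasiMeasurePreserving_fst.ae (Measure.ae_ae_of_ae_prod hvw)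
  filter_upwards [hslices, ae_mem_Ioo_snd] with q hv ht
  refine integral_congr_ae ?_
  filter_upwards [ae_restrict_of_ae_restrict_of_subset (Ioo_subset_Ioo_right ht.2.le) hv,
    ae_eq_restrict_Ioo_comp_sub_left hgG ht.2.le] with s h1 h2
  rw [h1, h2]

theorem energyDensity_ae_congr {ρ u₂ u₃ κ : ℝ}
    (hvw : v =ᵐ[μ.prod (volume.restrict (Ioo 0 T))] w) (hgG : g =ᵐ[volume.restrict (Ioo 0 T)] G) :
    energyDensity ρ u₂ u₃ κ lam g v =ᵐ[μ.prod (volume.restrict (Ioo 0 T))]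
      energyDensity ρ u₂ u₃ κ lam G w := by
  filter_upwards [hvw, memoryIntegral_ae_congr hvw hgG] with q h1 h2
  rw [energyDensity, energyDensity, h2, h1]

end Congr

theorem stmt_6_general {N : ℕ} (T : ℝ)
    (Ω : Set (Fin N → ℝ)) (hΩb : Bornology.IsBounded Ω)
    (ρ u₂ u₃ κ β : ℝ) (hρ : 0 < ρ) (hβ : 0 < β) :
    ∃ lam₀ : ℝ, 0 < lam₀ ∧
      ∀ lam : ℝ, lam₀ ≤ lam →
        ∀ g : ℝ → ℝ, AEStronglyMeasurable g (volume.restrict (Ioo (0:ℝ) T)) →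
          eLpNorm g ⊤ (volume.restrict (Ioo (0:ℝ) T)) ≤ ENNReal.ofReal β →
          ∀ v : (Fin N → ℝ) × ℝ → ℝ, MemLp v ⊤ (volume.restrict (Ω ×ˢ Ioo (0:ℝ) T)) →
            (∫ q in Ω ×ˢ Ioo (0:ℝ) T,
                (Real.exp (-(lam * q.2)) *
                    (ρ * (Real.exp (lam * q.2) * v q) *
                      (Real.exp (lam * q.2) * v q - u₂) *
                      (Real.exp (lam * q.2) * v q - u₃)) +
                  (lam + κ) * v q -
                  κ * ∫ s in Ioo (0:ℝ) q.2,
                    Real.exp (-(lam * (q.2 - s))) * g (q.2 - s) * v (q.1, s)) * v q) ≥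
              lam / 2 * ∫ q in Ω ×ˢ Ioo (0:ℝ) T, (v q) ^ 2 := by
  set C₁ := ρ * (u₃ - u₂) ^ 2 / 4
  refine ⟨1 + 2 * (C₁ + |κ| + |κ| * β), by positivity, fun lam hlam g hg hgβ v hv => ?_⟩
  obtain ⟨G, hG, hGβ, hgG⟩ := exists_measurable_abs_le_ae_eq hg hβ.le hgβ
  obtain ⟨w, hw, hwM, hvw⟩ := exists_measurable_abs_le_ae_eq hv.1 ENNReal.toReal_nonneg
    (ENNReal.ofReal_toReal hv.eLpNorm_ne_top).ge
  have : IsFiniteMeasure (volume.restrict Ω) := ⟨by simpa using hΩb.measure_lt_top⟩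
  have hQ : volume.restrict (Ω ×ˢ Ioo (0:ℝ) T) =
      (volume.restrict Ω).prod (volume.restrict (Ioo 0 T)) := by
    rw [Measure.prod_restrict, Measure.volume_eq_prod]
  rw [hQ] at hvw ⊢
  show lam / 2 * _ ≤ ∫ q, energyDensity ρ u₂ u₃ κ lam g v q ∂_
  rw [integral_congr_ae (energyDensity_ae_congr hvw hgG),
    integral_congr_ae (g := fun q => w q ^ 2) (hvw.mono fun q hq => by rw [hq])]
  have hlam1 : 1 ≤ lam := by
    have : 0 ≤ C₁ := by positivity
    nlinarith [abs_nonneg κ, mul_nonneg (abs_nonneg κ) hβ.le]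
  have hcoef : lam / 2 ≤ lam + κ - C₁ - |κ| * (β / lam) := by
    have := mul_le_mul_of_nonneg_left (div_le_self hβ.le hlam1) (abs_nonneg κ)
    linarith [neg_abs_le κ]
  exact (mul_le_mul_of_nonneg_right hcoef (integral_nonneg fun q => sq_nonneg _)).trans
    (mul_integral_sq_le_integral_energyDensity hρ.le (by linarith) hG hGβ hw hwM)

/-- Let `R(u) = ρ u (u-u₂)(u-u₃)` with `ρ > 0`, `0 ≤ u₂ ≤ u₃`, let `κ ∈ ℝ` and
`β > 0`. Then there exists `λ₀ > 0` such that for every `λ ≥ λ₀`, every `g ∈ L^∞(0,T)` with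
`‖g‖_{L^∞(0,T)} ≤ β`, and every `v ∈ L^∞(Q)`:
`∫∫_Q [e^{-λt} R(e^{λt}v) + (λ+κ)v - κ (K_λ(g)v)] v dxdt ≥ (λ/2) ‖v‖²_{L²(Q)}`,
where `(K_λ(g)v)(x,t) = ∫_0^t e^{-λ(t-s)} g(t-s) v(x,s) ds`. -/
theorem stmt_6 {N : ℕ} (hN : 1 ≤ N) (T : ℝ) (hT : 0 < T)
    (Ω : Set (Fin N → ℝ)) (hΩm : MeasurableSet Ω) (hΩb : Bornology.IsBounded Ω)
    (ρ u₂ u₃ κ β : ℝ) (hρ : 0 < ρ) (h2 : 0 ≤ u₂) (h23 : u₂ ≤ u₃) (hβ : 0 < β) :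
    ∃ lam₀ : ℝ, 0 < lam₀ ∧
      ∀ lam : ℝ, lam₀ ≤ lam →
        ∀ g : ℝ → ℝ, AEStronglyMeasurable g (volume.restrict (Ioo (0:ℝ) T)) →
          eLpNorm g ⊤ (volume.restrict (Ioo (0:ℝ) T)) ≤ ENNReal.ofReal β →
          ∀ v : (Fin N → ℝ) × ℝ → ℝ, MemLp v ⊤ (volume.restrict (Ω ×ˢ Ioo (0:ℝ) T)) →
            (∫ q in Ω ×ˢ Ioo (0:ℝ) T,
                (Real.exp (-(lam * q.2)) *
                    (ρ * (Real.exp (lam * q.2) * v q) *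
                      (Real.exp (lam * q.2) * v q - u₂) *
                      (Real.exp (lam * q.2) * v q - u₃)) +
                  (lam + κ) * v q -
                  κ * ∫ s in Ioo (0:ℝ) q.2,
                    Real.exp (-(lam * (q.2 - s))) * g (q.2 - s) * v (q.1, s)) * v q) ≥
              lam / 2 * ∫ q in Ω ×ˢ Ioo (0:ℝ) T, (v q) ^ 2 :=
  stmt_6_general T Ω hΩb ρ u₂ u₃ κ β hρ hβ
end

section
/- Let β > 0, let (g_n) be a sequence in L^∞(0,T) with ‖g_n‖_{L^∞(0,T)} ≤ β for all n and ∫_0^T g_n(τ) ψ(τ) dτ → ∫_0^T ḡ(τ) ψ(τ) dτ for every ψ ∈ L²(0,T), where ḡ ∈ L^∞(0,T); let (u_n) be a sequence in L^∞(Q) with ‖u_n − ū‖_{L^∞(Q)} → 0 for some ū ∈ L^∞(Q). Then K(g_n)u_n converges weakly to K(ḡ)ū in L²(Q); that is, for every φ ∈ L²(Q), ∫∫_Q φ(x,t) (K(g_n)u_n)(x,t) dx dt → ∫∫_Q φ(x,t) (K(ḡ)ū)(x,t) dx dt as n → ∞. -/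
/-!
Replace `g_n, ḡ, u_n, ū` by bounded measurable representatives: this changes `K(g)u` only on a
null set of `Q`, because the shear `(x, t, τ) ↦ (x, t - τ)` is quasi-measure-preserving. Writing
`u_n = ū + w_n` with `|w_n| ≤ ‖u_n - ū‖_∞`, Fubini gives
`∫_Q φ K(g_n)u_n = ∫_0^T g_n Ψ + ∫_Q φ K(g_n)w_n` with `Ψ(τ) = ∫_Q φ(x,t) 1_{τ<t} ū(x,t-τ)`.
Since `Ψ` is bounded it lies in `L²(0,T)`, so the first term converges by the weak convergence
of `g_n`, while the second is at most `β T ‖φ‖_{L¹} ‖u_n - ū‖_∞ → 0`.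
-/

open MeasureTheory Set Filter Topology

section BoundedRepresentative

variable {X : Type*} [MeasurableSpace X] {μ : Measure X} {f : X → ℝ}

theorem exists_measurable_abs_le_ae_eq_of_eLpNorm_top_le {b : ℝ} (hb : 0 ≤ b)
    (hf : AEStronglyMeasurable f μ) (hfb : eLpNorm f ⊤ μ ≤ ENNReal.ofReal b) :
    ∃ F : X → ℝ, Measurable F ∧ (∀ x, |F x| ≤ b) ∧ f =ᵐ[μ] F := by
  have hbound : ∀ᵐ x ∂μ, |f x| ≤ b := by
    filter_upwards [ae_le_eLpNormEssSup (f := f) (μ := μ)] with x hx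
    rw [← eLpNorm_exponent_top, Real.enorm_eq_ofReal_abs] at hx
    exact (ENNReal.ofReal_le_ofReal_iff hb).1 (hx.trans hfb)
  refine ⟨fun x => max (-b) (min b (hf.mk f x)),
    measurable_const.max (measurable_const.min hf.measurable_mk), fun x => ?_, ?_⟩
  · exact abs_le.2 ⟨le_max_left _ _, max_le (by linarith) (min_le_left _ _)⟩
  · filter_upwards [hf.ae_eq_mk, hbound] with x hfx hx
    rw [abs_le] at hx
    rw [← hfx, min_eq_right hx.2, max_eq_right hx.1]

theorem MeasureTheory.MemLp.exists_measurable_abs_le_ae_eq (hf : MemLp f ⊤ μ) :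
    ∃ F : X → ℝ, Measurable F ∧ (∀ x, |F x| ≤ (eLpNorm f ⊤ μ).toReal) ∧ f =ᵐ[μ] F :=
  exists_measurable_abs_le_ae_eq_of_eLpNorm_top_le ENNReal.toReal_nonneg hf.1
    (ENNReal.ofReal_toReal hf.2.ne).ge

end BoundedRepresentative

noncomputable def timeConv {α : Type*} [MeasurableSpace α] (g : ℝ → ℝ) (u : α × ℝ → ℝ)
    (q : α × ℝ) : ℝ :=
  ∫ τ in Ioo 0 q.2, g τ * u (q.1, q.2 - τ)

noncomputable def timeConvAdjoint {α : Type*} [MeasureSpace α] (Ω : Set α) (T : ℝ)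
    (φ v : α × ℝ → ℝ) (τ : ℝ) : ℝ :=
  ∫ q in Ω ×ˢ Ioo 0 T, φ q * if τ < q.2 then v (q.1, q.2 - τ) else 0

section TimeConv

variable {α : Type*} [MeasurableSpace α] {c : ℝ → ℝ} {v w : α × ℝ → ℝ} {b m : ℝ}

theorem abs_timeConv_le (hcb : ∀ τ, |c τ| ≤ b) (hvb : ∀ p, |v p| ≤ m) {q : α × ℝ} {T : ℝ}
    (hq : q.2 ∈ Icc 0 T) : |timeConv c v q| ≤ b * m * T := by
  have hbm : 0 ≤ b * m := mul_nonneg ((abs_nonneg _).trans (hcb 0)) ((abs_nonneg _).trans (hvb q))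
  calc |timeConv c v q| ≤ b * m * volume.real (Ioo (0 : ℝ) q.2) :=
        norm_setIntegral_le_of_norm_le_const (f := fun τ => c τ * v (q.1, q.2 - τ))
          measure_Ioo_lt_top fun τ _ => by
          exact norm_mul_le_of_le (hcb τ) (hvb _)
    _ ≤ b * m * T := by
        rw [Real.volume_real_Ioo_of_le hq.1, sub_zero]
        exact mul_le_mul_of_nonneg_left hq.2 hbm

theorem integrableOn_timeConv_integrand (hc : Measurable c) (hcb : ∀ τ, |c τ| ≤ b)
    (hv : Measurable v) (hvb : ∀ p, |v p| ≤ m) (q : α × ℝ) :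
    IntegrableOn (fun τ => c τ * v (q.1, q.2 - τ)) (Ioo 0 q.2) :=
  Measure.integrableOn_of_bounded (M := b * m) measure_Ioo_lt_top.ne
    (by fun_prop : Measurable fun τ => c τ * v (q.1, q.2 - τ)).aestronglyMeasurable
    (ae_of_all _ fun τ => norm_mul_le_of_le (hcb τ) (hvb _))

theorem timeConv_add (hc : Measurable c) (hcb : ∀ τ, |c τ| ≤ b) (hv : Measurable v)
    (hvb : ∀ p, |v p| ≤ m) (hw : Measurable w) {m' : ℝ} (hwb : ∀ p, |w p| ≤ m') (q : α × ℝ) :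
    timeConv c (v + w) q = timeConv c v q + timeConv c w q := by
  simp only [timeConv, Pi.add_apply, mul_add]
  exact integral_add (integrableOn_timeConv_integrand hc hcb hv hvb q)
    (integrableOn_timeConv_integrand hc hcb hw hwb q)

theorem stronglyMeasurable_timeConv (hc : Measurable c) (hv : Measurable v) :
    StronglyMeasurable (timeConv c v) := by
  have hset : MeasurableSet {z : (α × ℝ) × ℝ | z.2 ∈ Ioo 0 z.1.2} :=
    (measurableSet_lt measurable_const measurable_snd).inter
      (measurableSet_lt measurable_snd measurable_fst.snd)
  have hmeas : Measurable fun z : (α × ℝ) × ℝ =>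
      if z.2 ∈ Ioo 0 z.1.2 then c z.2 * v (z.1.1, z.1.2 - z.2) else 0 :=
    Measurable.ite hset (by fun_prop) measurable_const
  convert hmeas.stronglyMeasurable.integral_prod_right' (ν := volume) using 2 with q
  rw [timeConv, ← integral_indicator measurableSet_Ioo]
  simp only [indicator_apply]

end TimeConv

section Shift

variable {α : Type*} [MeasureSpace α] [SFinite (volume : Measure α)]

theorem quasiMeasurePreserving_timeShift :
    Measure.QuasiMeasurePreserving (fun z : (α × ℝ) × ℝ => (z.1.1, z.1.2 - z.2)) := by
  set shift := fun z : (α × ℝ) × ℝ => (z.1.1, z.1.2 - z.2)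
  have hf : Measurable shift := by fun_prop
  refine ⟨hf, Measure.AbsolutelyContinuous.mk fun s hs hs0 => ?_⟩
  rw [Measure.map_apply hf hs, Measure.volume_eq_prod, Measure.prod_apply_symm (hf hs)]
  have hslice (τ : ℝ) : volume ((fun q : α × ℝ => (q, τ)) ⁻¹' (shift ⁻¹' s)) = 0 :=
    (((MeasurePreserving.id volume).prod (measurePreserving_sub_right volume τ)).measure_preimage
      hs.nullMeasurableSet).trans hs0
  simp [hslice]

theorem ae_restrict_timeShift {Ω : Set α} (hΩ : MeasurableSet Ω) {T : ℝ} {P : α × ℝ → Prop}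
    (hP : ∀ᵐ p ∂volume.restrict (Ω ×ˢ Ioo 0 T), P p) :
    ∀ᵐ q ∂volume.restrict (Ω ×ˢ Ioo 0 T), ∀ᵐ τ ∂volume.restrict (Ioo 0 q.2),
      P (q.1, q.2 - τ) := by
  have hQ : MeasurableSet (Ω ×ˢ Ioo (0 : ℝ) T) := hΩ.prod measurableSet_Ioo
  rw [ae_restrict_iff' hQ] at hP
  have hshift := quasiMeasurePreserving_timeShift.ae hP
  rw [Measure.volume_eq_prod] at hshift
  filter_upwards [ae_restrict_of_ae (Measure.ae_ae_of_ae_prod hshift), ae_restrict_mem hQ]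
    with q hq hqQ
  filter_upwards [ae_restrict_of_ae hq, ae_restrict_mem measurableSet_Ioo] with τ hτ hτq
  exact hτ ⟨hqQ.1, by linarith [hτq.2], by linarith [hτq.1, hqQ.2.2]⟩

theorem timeConv_congr_ae {Ω : Set α} (hΩ : MeasurableSet Ω) {T : ℝ} {c c' : ℝ → ℝ}
    (hc : c =ᵐ[volume.restrict (Ioo 0 T)] c') {v v' : α × ℝ → ℝ}
    (hv : v =ᵐ[volume.restrict (Ω ×ˢ Ioo 0 T)] v') :
    timeConv c v =ᵐ[volume.restrict (Ω ×ˢ Ioo 0 T)] timeConv c' v' := by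
  filter_upwards [ae_restrict_timeShift hΩ hv, ae_restrict_mem (hΩ.prod measurableSet_Ioo)]
    with q hq hqQ
  refine integral_congr_ae ?_
  filter_upwards [hq, ae_restrict_of_ae_restrict_of_subset (Ioo_subset_Ioo_right hqQ.2.2.le) hc]
    with τ hvτ hcτ
  rw [hvτ, hcτ]

end Shift

section Duality

variable {α : Type*} [MeasureSpace α] {Ω : Set α} {T : ℝ}
  {φ : α × ℝ → ℝ} {c : ℝ → ℝ} {v w : α × ℝ → ℝ} {b m : ℝ}

theorem abs_timeConvAdjoint_le (hφ : Integrable φ (volume.restrict (Ω ×ˢ Ioo 0 T)))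
    (hvb : ∀ p, |v p| ≤ m) (τ : ℝ) :
    |timeConvAdjoint Ω T φ v τ| ≤ (∫ q in Ω ×ˢ Ioo 0 T, |φ q|) * m := by
  rw [← integral_mul_const, ← Real.norm_eq_abs]
  refine norm_integral_le_of_norm_le (hφ.abs.mul_const m) (ae_of_all _ fun q => ?_)
  rw [norm_mul, Real.norm_eq_abs]
  refine mul_le_mul_of_nonneg_left ?_ (abs_nonneg _)
  split_ifs
  exacts [hvb _, by simpa using (abs_nonneg _).trans (hvb q)]

theorem abs_integral_mul_timeConv_le (hΩ : MeasurableSet Ω)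
    (hφ : Integrable φ (volume.restrict (Ω ×ˢ Ioo 0 T)))
    (hcb : ∀ τ, |c τ| ≤ b) (hvb : ∀ p, |v p| ≤ m) :
    |∫ q in Ω ×ˢ Ioo 0 T, φ q * timeConv c v q| ≤ (∫ q in Ω ×ˢ Ioo 0 T, |φ q|) * (b * m * T) := by
  rw [← integral_mul_const, ← Real.norm_eq_abs]
  refine norm_integral_le_of_norm_le (hφ.abs.mul_const _) ?_
  filter_upwards [ae_restrict_mem (hΩ.prod measurableSet_Ioo)] with q hq
  rw [norm_mul, Real.norm_eq_abs]
  exact mul_le_mul_of_nonneg_left (abs_timeConv_le hcb hvb ⟨hq.2.1.le, hq.2.2.le⟩) (abs_nonneg _)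

theorem tendsto_integral_mul_timeConv_zero (hΩ : MeasurableSet Ω)
    (hφ : Integrable φ (volume.restrict (Ω ×ˢ Ioo 0 T))) {c : ℕ → ℝ → ℝ}
    (hcb : ∀ n τ, |c n τ| ≤ b) {w : ℕ → α × ℝ → ℝ} {ε : ℕ → ℝ} (hwb : ∀ n p, |w n p| ≤ ε n)
    (hε : Tendsto ε atTop (𝓝 0)) :
    Tendsto (fun n => ∫ q in Ω ×ˢ Ioo 0 T, φ q * timeConv (c n) (w n) q) atTop (𝓝 0) := by
  refine squeeze_zero_norm (fun n => abs_integral_mul_timeConv_le hΩ hφ (hcb n) (hwb n)) ?_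
  simpa using ((hε.const_mul b).mul_const T).const_mul (∫ q in Ω ×ˢ Ioo 0 T, |φ q|)

theorem integrable_mul_timeConv (hΩ : MeasurableSet Ω)
    (hφ : Integrable φ (volume.restrict (Ω ×ˢ Ioo 0 T)))
    (hc : Measurable c) (hcb : ∀ τ, |c τ| ≤ b) (hv : Measurable v) (hvb : ∀ p, |v p| ≤ m) :
    Integrable (fun q => φ q * timeConv c v q) (volume.restrict (Ω ×ˢ Ioo 0 T)) :=
  hφ.mul_bdd (stronglyMeasurable_timeConv hc hv).aestronglyMeasurable
    (ae_restrict_of_forall_mem (hΩ.prod measurableSet_Ioo) fun _ hq =>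
      abs_timeConv_le hcb hvb ⟨hq.2.1.le, hq.2.2.le⟩)

variable [SFinite (volume : Measure α)]

theorem integral_mul_timeConv_congr_ae (hΩ : MeasurableSet Ω) {c c' : ℝ → ℝ}
    (hc : c =ᵐ[volume.restrict (Ioo 0 T)] c') {v v' : α × ℝ → ℝ}
    (hv : v =ᵐ[volume.restrict (Ω ×ˢ Ioo 0 T)] v') :
    ∫ q in Ω ×ˢ Ioo 0 T, φ q * timeConv c v q = ∫ q in Ω ×ˢ Ioo 0 T, φ q * timeConv c' v' q :=
  integral_congr_ae (EventuallyEq.rfl.mul (timeConv_congr_ae hΩ hc hv))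

theorem memLp_top_timeConvAdjoint (hφ : Integrable φ (volume.restrict (Ω ×ˢ Ioo 0 T)))
    (hv : Measurable v) (hvb : ∀ p, |v p| ≤ m) (ν : Measure ℝ) :
    MemLp (timeConvAdjoint Ω T φ v) ⊤ ν := by
  refine memLp_top_of_bound ?_ _ (ae_of_all _ (abs_timeConvAdjoint_le hφ hvb))
  have hmeas : AEStronglyMeasurable
      (fun z : ℝ × (α × ℝ) => φ z.2 * if z.1 < z.2.2 then v (z.2.1, z.2.2 - z.1) else 0)
      (ν.prod (volume.restrict (Ω ×ˢ Ioo 0 T))) :=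
    hφ.1.comp_snd.mul (Measurable.ite (measurableSet_lt measurable_fst measurable_snd.snd)
      (by fun_prop) measurable_const).aestronglyMeasurable
  exact hmeas.integral_prod_right'

theorem integral_mul_timeConv (hΩ : MeasurableSet Ω)
    (hφ : Integrable φ (volume.restrict (Ω ×ˢ Ioo 0 T)))
    (hc : Measurable c) (hcb : ∀ τ, |c τ| ≤ b) (hv : Measurable v) (hvb : ∀ p, |v p| ≤ m) :
    ∫ q in Ω ×ˢ Ioo 0 T, φ q * timeConv c v q
      = ∫ τ in Ioo 0 T, c τ * timeConvAdjoint Ω T φ v τ := by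
  set F : α × ℝ → ℝ → ℝ := fun q τ => φ q * if τ < q.2 then c τ * v (q.1, q.2 - τ) else 0
  have hF : Integrable (Function.uncurry F)
      ((volume.restrict (Ω ×ˢ Ioo 0 T)).prod (volume.restrict (Ioo 0 T))) := by
    refine (hφ.norm.mul_prod (integrable_const (b * m))).mono' ?_ (ae_of_all _ fun z => ?_)
    · exact hφ.1.comp_fst.mul (Measurable.ite (measurableSet_lt measurable_snd measurable_fst.snd)
        (by fun_prop) measurable_const).aestronglyMeasurable
    · simp only [Function.uncurry, F, norm_mul]
      refine mul_le_mul_of_nonneg_left ?_ (norm_nonneg _)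
      split_ifs
      · exact norm_mul_le_of_le (hcb z.2) (hvb _)
      · simpa using mul_nonneg ((abs_nonneg _).trans (hcb 0)) ((abs_nonneg _).trans (hvb z.1))
  calc ∫ q in Ω ×ˢ Ioo 0 T, φ q * timeConv c v q
      = ∫ q in Ω ×ˢ Ioo 0 T, ∫ τ in Ioo 0 T, F q τ := by
        refine setIntegral_congr_fun (hΩ.prod measurableSet_Ioo) fun q hq => ?_
        have hind : (fun τ => if τ < q.2 then c τ * v (q.1, q.2 - τ) else 0)
            = (Iio q.2).indicator fun τ => c τ * v (q.1, q.2 - τ) := by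
          ext τ; simp [indicator_apply]
        simp only [F, timeConv]
        rw [integral_const_mul, hind, setIntegral_indicator measurableSet_Iio, Ioo_inter_Iio,
          min_eq_right hq.2.2.le]
    _ = ∫ τ in Ioo 0 T, ∫ q in Ω ×ˢ Ioo 0 T, F q τ := integral_integral_swap hF
    _ = ∫ τ in Ioo 0 T, c τ * timeConvAdjoint Ω T φ v τ := by
        refine integral_congr_ae (ae_of_all _ fun τ => ?_)
        simp only [F, timeConvAdjoint, ← integral_const_mul]
        congr 1 with q
        split_ifs <;> ring

theorem integral_mul_timeConv_add (hΩ : MeasurableSet Ω)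
    (hφ : Integrable φ (volume.restrict (Ω ×ˢ Ioo 0 T)))
    (hc : Measurable c) (hcb : ∀ τ, |c τ| ≤ b) (hv : Measurable v) (hvb : ∀ p, |v p| ≤ m)
    (hw : Measurable w) {m' : ℝ} (hwb : ∀ p, |w p| ≤ m') :
    ∫ q in Ω ×ˢ Ioo 0 T, φ q * timeConv c (v + w) q
      = (∫ τ in Ioo 0 T, c τ * timeConvAdjoint Ω T φ v τ)
        + ∫ q in Ω ×ˢ Ioo 0 T, φ q * timeConv c w q := by
  rw [← integral_mul_timeConv hΩ hφ hc hcb hv hvb, ← integral_add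
    (integrable_mul_timeConv hΩ hφ hc hcb hv hvb) (integrable_mul_timeConv hΩ hφ hc hcb hw hwb)]
  simp only [timeConv_add hc hcb hv hvb hw hwb, mul_add]

end Duality

theorem stmt_9_general {N : ℕ} (T : ℝ)
    (Ω : Set (Fin N → ℝ)) (hΩm : MeasurableSet Ω) (hΩb : Bornology.IsBounded Ω)
    (β : ℝ) (hβ : 0 < β)
    (g : ℕ → ℝ → ℝ)
    (hgmeas : ∀ n, AEStronglyMeasurable (g n) (volume.restrict (Ioo (0:ℝ) T)))
    (hgbd : ∀ n, eLpNorm (g n) ⊤ (volume.restrict (Ioo (0:ℝ) T)) ≤ ENNReal.ofReal β)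
    (gbar : ℝ → ℝ) (hgbar : MemLp gbar ⊤ (volume.restrict (Ioo (0:ℝ) T)))
    (hgweak : ∀ ψ : ℝ → ℝ, MemLp ψ 2 (volume.restrict (Ioo (0:ℝ) T)) →
      Tendsto (fun n => ∫ τ in Ioo (0:ℝ) T, g n τ * ψ τ) atTop
        (nhds (∫ τ in Ioo (0:ℝ) T, gbar τ * ψ τ)))
    (u : ℕ → (Fin N → ℝ) × ℝ → ℝ)
    (hu : ∀ n, MemLp (u n) ⊤ (volume.restrict (Ω ×ˢ Ioo (0:ℝ) T)))
    (ubar : (Fin N → ℝ) × ℝ → ℝ)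
    (hubar : MemLp ubar ⊤ (volume.restrict (Ω ×ˢ Ioo (0:ℝ) T)))
    (huconv : Tendsto (fun n => eLpNorm (u n - ubar) ⊤ (volume.restrict (Ω ×ˢ Ioo (0:ℝ) T)))
      atTop (nhds 0)) :
    ∀ φ : (Fin N → ℝ) × ℝ → ℝ, MemLp φ 2 (volume.restrict (Ω ×ˢ Ioo (0:ℝ) T)) →
      Tendsto (fun n => ∫ q in Ω ×ˢ Ioo (0:ℝ) T,
          φ q * ∫ τ in Ioo (0:ℝ) q.2, g n τ * u n (q.1, q.2 - τ)) atTop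
        (nhds (∫ q in Ω ×ˢ Ioo (0:ℝ) T,
          φ q * ∫ τ in Ioo (0:ℝ) q.2, gbar τ * ubar (q.1, q.2 - τ))) := by
  intro φ hφ
  have : IsFiniteMeasure (volume.restrict (Ω ×ˢ Ioo (0:ℝ) T)) :=
    ⟨by rw [Measure.restrict_apply_univ]
        exact (hΩb.prod (Metric.isBounded_Ioo 0 T)).measure_lt_top⟩
  have hφ1 : Integrable φ (volume.restrict (Ω ×ˢ Ioo (0:ℝ) T)) := hφ.integrable one_le_two
  choose G hG hGβ hgG using fun n =>
    exists_measurable_abs_le_ae_eq_of_eLpNorm_top_le hβ.le (hgmeas n) (hgbd n)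
  obtain ⟨Gb, hGb, hGbb, hgGb⟩ := hgbar.exists_measurable_abs_le_ae_eq
  obtain ⟨Ub, hUb, hUbb, huUb⟩ := hubar.exists_measurable_abs_le_ae_eq
  choose W hW hWb huW using fun n => ((hu n).sub hubar).exists_measurable_abs_le_ae_eq
  set Ψ := timeConvAdjoint Ω T φ Ub
  have hΨ : ∀ {c c' : ℝ → ℝ}, c =ᵐ[volume.restrict (Ioo 0 T)] c' →
      ∫ τ in Ioo 0 T, c τ * Ψ τ = ∫ τ in Ioo 0 T, c' τ * Ψ τ :=
    fun h => integral_congr_ae (h.mul EventuallyEq.rfl)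
  have hsplit : ∀ n, ∫ q in Ω ×ˢ Ioo (0:ℝ) T, φ q * timeConv (g n) (u n) q
      = (∫ τ in Ioo 0 T, g n τ * Ψ τ) + ∫ q in Ω ×ˢ Ioo (0:ℝ) T, φ q * timeConv (G n) (W n) q := by
    intro n
    have hu_eq : u n =ᵐ[volume.restrict (Ω ×ˢ Ioo (0:ℝ) T)] Ub + W n := by
      filter_upwards [huUb, huW n] with p h1 h2
      simp [← h1, ← h2]
    rw [integral_mul_timeConv_congr_ae hΩm (hgG n) hu_eq,
      integral_mul_timeConv_add hΩm hφ1 (hG n) (hGβ n) hUb hUbb (hW n) (hWb n), ← hΨ (hgG n)]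
  have hlim : ∫ q in Ω ×ˢ Ioo (0:ℝ) T, φ q * timeConv gbar ubar q
      = ∫ τ in Ioo 0 T, gbar τ * Ψ τ := by
    rw [integral_mul_timeConv_congr_ae hΩm hgGb huUb,
      integral_mul_timeConv hΩm hφ1 hGb hGbb hUb hUbb, ← hΨ hgGb]
  have hweak := hgweak Ψ ((memLp_top_timeConvAdjoint hφ1 hUb hUbb _).mono_exponent le_top)
  have herr := tendsto_integral_mul_timeConv_zero hΩm hφ1 hGβ hWb
    ((ENNReal.tendsto_toReal ENNReal.zero_ne_top).comp huconv)
  show Tendsto (fun n => ∫ q in Ω ×ˢ Ioo (0:ℝ) T, φ q * timeConv (g n) (u n) q) atTop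
    (𝓝 (∫ q in Ω ×ˢ Ioo (0:ℝ) T, φ q * timeConv gbar ubar q))
  simpa only [hsplit, hlim, add_zero] using hweak.add herr

/-- Let `β > 0`, let `(g_n) ⊂ L^∞(0,T)` with `‖g_n‖_∞ ≤ β` converge weakly in
`L²(0,T)` to `ḡ ∈ L^∞(0,T)`, and let `(u_n) ⊂ L^∞(Q)` converge to `ū ∈ L^∞(Q)` in the
`L^∞(Q)` norm.  Then `K(g_n)u_n ⇀ K(ḡ)ū` weakly in `L²(Q)`: for every `φ ∈ L²(Q)`,
`∫∫_Q φ · K(g_n)u_n dxdt → ∫∫_Q φ · K(ḡ)ū dxdt`, where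
`(K(g)u)(x,t) = ∫_0^t g(τ) u(x,t-τ) dτ`. -/
theorem stmt_9 {N : ℕ} (hN : 1 ≤ N) (T : ℝ) (hT : 0 < T)
    (Ω : Set (Fin N → ℝ)) (hΩm : MeasurableSet Ω) (hΩb : Bornology.IsBounded Ω)
    (β : ℝ) (hβ : 0 < β)
    (g : ℕ → ℝ → ℝ)
    (hgmeas : ∀ n, AEStronglyMeasurable (g n) (volume.restrict (Ioo (0:ℝ) T)))
    (hgbd : ∀ n, eLpNorm (g n) ⊤ (volume.restrict (Ioo (0:ℝ) T)) ≤ ENNReal.ofReal β)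
    (gbar : ℝ → ℝ) (hgbar : MemLp gbar ⊤ (volume.restrict (Ioo (0:ℝ) T)))
    (hgweak : ∀ ψ : ℝ → ℝ, MemLp ψ 2 (volume.restrict (Ioo (0:ℝ) T)) →
      Tendsto (fun n => ∫ τ in Ioo (0:ℝ) T, g n τ * ψ τ) atTop
        (nhds (∫ τ in Ioo (0:ℝ) T, gbar τ * ψ τ)))
    (u : ℕ → (Fin N → ℝ) × ℝ → ℝ)
    (hu : ∀ n, MemLp (u n) ⊤ (volume.restrict (Ω ×ˢ Ioo (0:ℝ) T)))
    (ubar : (Fin N → ℝ) × ℝ → ℝ)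
    (hubar : MemLp ubar ⊤ (volume.restrict (Ω ×ˢ Ioo (0:ℝ) T)))
    (huconv : Tendsto (fun n => eLpNorm (u n - ubar) ⊤ (volume.restrict (Ω ×ˢ Ioo (0:ℝ) T)))
      atTop (nhds 0)) :
    ∀ φ : (Fin N → ℝ) × ℝ → ℝ, MemLp φ 2 (volume.restrict (Ω ×ˢ Ioo (0:ℝ) T)) →
      Tendsto (fun n => ∫ q in Ω ×ˢ Ioo (0:ℝ) T,
          φ q * ∫ τ in Ioo (0:ℝ) q.2, g n τ * u n (q.1, q.2 - τ)) atTop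
        (nhds (∫ q in Ω ×ˢ Ioo (0:ℝ) T,
          φ q * ∫ τ in Ioo (0:ℝ) q.2, gbar τ * ubar (q.1, q.2 - τ))) :=
  stmt_9_general T Ω hΩm hΩb β hβ g hgmeas hgbd gbar hgbar hgweak u hu ubar hubar huconv
end
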